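/- Let T be a positively edge-weighted phylogenetic X-tree with |X| = n, let 2 ≤ m ≤ n, let D be the m-subtree weight map of T, and let S_D(i,j) = Σ D({i,j} ∪ Y), the sum over all (m−2)-element subsets Y of X \ {i,j}. Let (a1,a2;a3,a4) be a tree quartet of T and let P be its splitting path, the set of edges lying both on the path from a1 to a3 and on the path from a2 to a4. Then S_D(a1,a2) + S_D(a3,a4) − S_D(a1,a3) − S_D(a2,a4) = −Σ_{e∈P} [C(|L_{a1}(e)|−2, m−2) + C(n−|L_{a1}(e)|−2, m−2)]·w(e), where C(·,·) denotes the binomial coefficient. -/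
import Mathlib


open SimpleGraph Finset

attribute [local instance] Classical.propDecidable

noncomputable section

/-- `e` lies on some path (hence on the unique path, in a tree) from `a` to `b`. -/
def OnPath {V : Type*} (G : SimpleGraph V) (a b : V) (e : Sym2 V) : Prop :=
  ∃ p : G.Walk a b, p.IsPath ∧ e ∈ p.edges

/-- The edge set `[R]` of the smallest subtree of a tree `G` spanning `R`. -/
def subtreeEdges {V : Type*} [Fintype V] (G : SimpleGraph V) (R : Finset V) :
    Finset (Sym2 V) :=
  G.edgeFinset.filter fun e => ∃ a ∈ R, ∃ b ∈ R, OnPath G a b e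

/-- The subtree weight `D(R) = ∑_{e ∈ [R]} w(e)`. -/
def subtreeWeight {V : Type*} [Fintype V] (G : SimpleGraph V) (w : Sym2 V → ℝ)
    (R : Finset V) : ℝ :=
  ∑ e ∈ subtreeEdges G R, w e

/-- `L_i(e)`: the set of leaves in the component of `T - e` containing `i`. -/
def leafSide {V : Type*} [Fintype V] (G : SimpleGraph V) (X : Finset V)
    (i : V) (e : Sym2 V) : Finset V :=
  X.filter fun x => (G.deleteEdges {e}).Reachable i x

/-- `S_D(i,j) = ∑_{Y ∈ C(X \ {i,j}, m-2)} D({i,j} ∪ Y)`. -/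
def SDmap {V : Type*} [Fintype V] (G : SimpleGraph V) (w : Sym2 V → ℝ)
    (X : Finset V) (m : ℕ) (i j : V) : ℝ :=
  ∑ Y ∈ ((X.erase i).erase j).powersetCard (m - 2),
    subtreeWeight G w (insert i (insert j Y))

/-- Binomial coefficient with integer arguments, `0` whenever `b < 0` or `a < b`. -/
def C (a b : ℤ) : ℤ := if 0 ≤ b ∧ b ≤ a then (a.toNat.choose b.toNat : ℤ) else 0

/-- `(i,j;k,l)` is a tree quartet: the (unique) path from `i` to `j` and the (unique) path
from `k` to `l` share no edges. -/
def IsQuartet {V : Type*} (G : SimpleGraph V) (i j k l : V) : Prop :=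
  ∀ (p : G.Walk i j) (q : G.Walk k l), p.IsPath → q.IsPath →
    ∀ e ∈ p.edges, e ∉ q.edges

section Aux

variable {V : Type*}

lemma side_total_aux {G : SimpleGraph V} {u v : V} {x y : V} (p : G.Walk x y) :
    (G.deleteEdges {s(u, v)}).Reachable x y ∨ (G.deleteEdges {s(u, v)}).Reachable x u ∨
      (G.deleteEdges {s(u, v)}).Reachable x v := by
  induction p with
  | nil => exact Or.inl Reachable.rfl
  | @cons a b c h q ih =>
    by_cases he : s(a, b) = s(u, v)
    · rw [Sym2.eq_iff] at he
      rcases he with ⟨rfl, rfl⟩ | ⟨rfl, rfl⟩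
      · exact Or.inr (Or.inl Reachable.rfl)
      · exact Or.inr (Or.inr Reachable.rfl)
    · have hadj : (G.deleteEdges {s(u, v)}).Adj a b := by simp [he, h]
      rcases ih with h1 | h1 | h1
      · exact Or.inl (hadj.reachable.trans h1)
      · exact Or.inr (Or.inl (hadj.reachable.trans h1))
      · exact Or.inr (Or.inr (hadj.reachable.trans h1))

lemma side_total {G : SimpleGraph V} (hc : G.Connected) (u v x : V) :
    (G.deleteEdges {s(u, v)}).Reachable x u ∨ (G.deleteEdges {s(u, v)}).Reachable x v := by
  obtain ⟨p⟩ := hc.preconnected x u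
  rcases side_total_aux (u := u) (v := v) p with h | h | h
  · exact Or.inl h
  · exact Or.inl h
  · exact Or.inr h

lemma sameSide_of_not {G : SimpleGraph V} (hc : G.Connected) {e : Sym2 V} {a x y : V}
    (hx : ¬ (G.deleteEdges {e}).Reachable a x) (hy : ¬ (G.deleteEdges {e}).Reachable a y) :
    (G.deleteEdges {e}).Reachable x y := by
  induction e with
  | _ u v =>
    have htot := side_total hc u v
    rcases htot a with ha | ha
    · rcases htot x with hx' | hx'
      · exact absurd (ha.trans hx'.symm) hx
      · rcases htot y with hy' | hy'
        · exact absurd (ha.trans hy'.symm) hy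
        · exact hx'.trans hy'.symm
    · rcases htot x with hx' | hx'
      · rcases htot y with hy' | hy'
        · exact hx'.trans hy'.symm
        · exact absurd (ha.trans hy'.symm) hy
      · exact absurd (ha.trans hx'.symm) hx

lemma onPath_iff {G : SimpleGraph V} (hT : G.IsTree) {e : Sym2 V}
    (a b : V) : OnPath G a b e ↔ ¬ (G.deleteEdges {e}).Reachable a b := by
  constructor
  · rintro ⟨p, hp, hep⟩ hr
    obtain ⟨q⟩ := hr
    have hsub : ∀ f ∈ q.toPath.val.edges, f ∈ G.edgeSet := fun f hf =>
      edgeSet_mono (G.deleteEdges_le _) (q.toPath.val.edges_subset_edgeSet hf)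
    set t := q.toPath.val.transfer G hsub with ht
    have htp : t.IsPath := q.toPath.prop.transfer hsub
    have huniq := hT.IsAcyclic.path_unique ⟨p, hp⟩ ⟨t, htp⟩
    have hpe : p = t := congrArg Subtype.val huniq
    rw [hpe, ht, Walk.edges_transfer] at hep
    have := q.toPath.val.edges_subset_edgeSet hep
    rw [edgeSet_deleteEdges] at this
    exact this.2 rfl
  · intro hn
    obtain ⟨p0⟩ := hT.isConnected.preconnected a b
    by_cases hep : e ∈ p0.toPath.val.edges
    · exact ⟨p0.toPath.val, p0.toPath.prop, hep⟩
    · exfalso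
      exact hn ⟨(p0.toPath.val).toDeleteEdges {e}
        (fun f hf => by simp only [Set.mem_singleton_iff]; rintro rfl; exact hep hf)⟩

end Aux

section Aux2

variable {V : Type*} [Fintype V]

/-- Number of `(m-2)`-subsets `Y` of `X \ {i,j}` such that `{i,j} ∪ Y` crosses `e`. -/
def crossCount (G : SimpleGraph V) (X : Finset V) (i j : V) (m : ℕ) (e : Sym2 V) : ℕ :=
  ((((X.erase i).erase j).powersetCard (m-2)).filter
      (fun Y => ∃ a ∈ insert i (insert j Y), ∃ b ∈ insert i (insert j Y),
        ¬ (G.deleteEdges {e}).Reachable a b)).card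

lemma count_cross {G : SimpleGraph V}
    {X : Finset V} {i j : V} (hi : i ∈ X) (hj : j ∈ X) (hij : i ≠ j) (m : ℕ) (e : Sym2 V) :
    crossCount G X i j m e
    + (if (G.deleteEdges {e}).Reachable i j
        then ((leafSide G X i e).card - 2).choose (m-2) else 0)
    = (X.card - 2).choose (m-2) := by
  unfold crossCount
  have hjX : j ∈ X.erase i := Finset.mem_erase.2 ⟨hij.symm, hj⟩
  have hX' : ((X.erase i).erase j).card = X.card - 2 := by
    rw [Finset.card_erase_of_mem hjX, Finset.card_erase_of_mem hi]; omega
  by_cases hsij : (G.deleteEdges {e}).Reachable i j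
  · rw [if_pos hsij]
    have hiL : i ∈ leafSide G X i e := Finset.mem_filter.2 ⟨hi, Reachable.rfl⟩
    have hjL : j ∈ (leafSide G X i e).erase i :=
      Finset.mem_erase.2 ⟨hij.symm, Finset.mem_filter.2 ⟨hj, hsij⟩⟩
    have hL' : (((leafSide G X i e).erase i).erase j).card = (leafSide G X i e).card - 2 := by
      rw [Finset.card_erase_of_mem hjL, Finset.card_erase_of_mem hiL]; omega
    have key : ((((X.erase i).erase j).powersetCard (m-2)).filter
        (fun Y => ¬ ∃ a ∈ insert i (insert j Y), ∃ b ∈ insert i (insert j Y),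
          ¬ (G.deleteEdges {e}).Reachable a b))
        = (((leafSide G X i e).erase i).erase j).powersetCard (m-2) := by
      ext Y
      simp only [Finset.mem_filter, Finset.mem_powersetCard]
      push_neg
      constructor
      · rintro ⟨⟨hYsub, hYcard⟩, hall⟩
        refine ⟨fun x hx => ?_, hYcard⟩
        have hx' := hYsub hx
        rw [Finset.mem_erase] at hx' ⊢
        refine ⟨hx'.1, ?_⟩
        rw [Finset.mem_erase]
        rcases Finset.mem_erase.1 hx'.2 with ⟨hxi, hxX⟩
        refine ⟨hxi, Finset.mem_filter.2 ⟨hxX, ?_⟩⟩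
        exact hall i (Finset.mem_insert_self _ _) x
          (Finset.mem_insert_of_mem (Finset.mem_insert_of_mem hx))
      · rintro ⟨hYsub, hYcard⟩
        have hYX : Y ⊆ (X.erase i).erase j := by
          intro x hx
          have hx' := hYsub hx
          rw [Finset.mem_erase] at hx' ⊢
          refine ⟨hx'.1, ?_⟩
          rcases Finset.mem_erase.1 hx'.2 with ⟨hxi, hxL⟩
          exact Finset.mem_erase.2 ⟨hxi, (Finset.mem_filter.1 hxL).1⟩
        refine ⟨⟨hYX, hYcard⟩, ?_⟩
        have hall : ∀ z ∈ insert i (insert j Y), (G.deleteEdges {e}).Reachable i z := by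
          intro z hz
          rcases Finset.mem_insert.1 hz with rfl | hz
          · exact Reachable.rfl
          rcases Finset.mem_insert.1 hz with rfl | hz
          · exact hsij
          · have := hYsub hz
            exact (Finset.mem_filter.1 (Finset.mem_erase.1 (Finset.mem_erase.1 this).2).2).2
        intro a ha b hb
        exact (hall a ha).symm.trans (hall b hb)
    rw [← hL', ← Finset.card_powersetCard, ← key, ← hX', ← Finset.card_powersetCard]
    rw [← Finset.card_union_of_disjoint]
    · congr 1
      ext Y
      simp only [Finset.mem_union, Finset.mem_filter]
      constructor
      · rintro (h | h)
        · exact h.1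
        · exact h.1
      · intro hY
        by_cases hp : (∃ a ∈ insert i (insert j Y), ∃ b ∈ insert i (insert j Y),
          ¬(G.deleteEdges {e}).Reachable a b)
        · exact Or.inl ⟨hY, hp⟩
        · exact Or.inr ⟨hY, hp⟩
    · simp only [Finset.disjoint_left, Finset.mem_filter]
      intro Y h1 h2
      exact h2.2 h1.2
  · rw [if_neg hsij, Nat.add_zero]
    have hfull : ((((X.erase i).erase j).powersetCard (m-2)).filter
        (fun Y => ∃ a ∈ insert i (insert j Y), ∃ b ∈ insert i (insert j Y),
          ¬ (G.deleteEdges {e}).Reachable a b))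
        = ((X.erase i).erase j).powersetCard (m-2) := by
      ext Y
      simp only [Finset.mem_filter, and_iff_left_iff_imp]
      intro _
      exact ⟨i, Finset.mem_insert_self _ _, j,
        Finset.mem_insert_of_mem (Finset.mem_insert_self _ _), hsij⟩
    rw [hfull, Finset.card_powersetCard, hX']

lemma count_cross_real {G : SimpleGraph V}
    {X : Finset V} {i j : V} (hi : i ∈ X) (hj : j ∈ X) (hij : i ≠ j) (m : ℕ) (e : Sym2 V) :
    (crossCount G X i j m e : ℝ)
    = ((X.card - 2).choose (m-2) : ℝ)
      - (if (G.deleteEdges {e}).Reachable i j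
          then (((leafSide G X i e).card - 2).choose (m-2) : ℝ) else 0) := by
  have h := count_cross (G := G) hi hj hij m e
  have h2 := congrArg (Nat.cast : ℕ → ℝ) h
  push_cast at h2
  split_ifs at h2 ⊢ with hcnd
  · linarith
  · linarith

lemma C_cast {l m : ℕ} (hl : 2 ≤ l) (hm : 2 ≤ m) :
    ((C ((l:ℤ)-2) ((m:ℤ)-2) : ℤ) : ℝ) = (((l-2).choose (m-2) : ℕ) : ℝ) := by
  unfold C
  by_cases h : m ≤ l
  · rw [if_pos (by constructor <;> omega)]
    have h1 : (l:ℤ)-2 = ((l-2 : ℕ) : ℤ) := by omega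
    have h2 : (m:ℤ)-2 = ((m-2 : ℕ) : ℤ) := by omega
    rw [h1, h2, Int.toNat_natCast, Int.toNat_natCast]
    norm_num
  · rw [if_neg (by omega), Nat.choose_eq_zero_of_lt (by omega)]
    norm_num

lemma SDmap_eq {G : SimpleGraph V} (hT : G.IsTree) (w : Sym2 V → ℝ) (X : Finset V)
    (m : ℕ) (i j : V) :
    SDmap G w X m i j = ∑ e ∈ G.edgeFinset, (crossCount G X i j m e : ℝ) * w e := by
  unfold SDmap subtreeWeight subtreeEdges
  simp only [onPath_iff hT]
  simp only [Finset.sum_filter]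
  rw [Finset.sum_comm]
  apply Finset.sum_congr rfl
  intro e _
  rw [← Finset.sum_filter, Finset.sum_const, nsmul_eq_mul]
  unfold crossCount
  congr

lemma leafSide_congr {G : SimpleGraph V} {X : Finset V} {e : Sym2 V} {a b : V}
    (h : (G.deleteEdges {e}).Reachable a b) : leafSide G X a e = leafSide G X b e := by
  unfold leafSide
  apply Finset.filter_congr
  intro x _
  exact ⟨fun hx => h.symm.trans hx, fun hx => h.trans hx⟩

lemma leafSide_compl {G : SimpleGraph V} (hc : G.Connected) {X : Finset V} {e : Sym2 V} {a b : V}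
    (hab : ¬ (G.deleteEdges {e}).Reachable a b) : leafSide G X b e = X \ leafSide G X a e := by
  unfold leafSide
  ext x
  simp only [Finset.mem_filter, Finset.mem_sdiff]
  constructor
  · rintro ⟨hx, hbx⟩
    exact ⟨hx, fun hmem => hab (hmem.2.trans hbx.symm)⟩
  · rintro ⟨hx, hnot⟩
    have hax : ¬ (G.deleteEdges {e}).Reachable a x := fun h => hnot ⟨hx, h⟩
    exact ⟨hx, sameSide_of_not hc hab hax⟩

lemma leafSide_card_compl {G : SimpleGraph V} (hc : G.Connected) {X : Finset V} {e : Sym2 V}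
    {a b : V} (hab : ¬ (G.deleteEdges {e}).Reachable a b) :
    (leafSide G X b e).card = X.card - (leafSide G X a e).card := by
  rw [leafSide_compl hc hab, Finset.card_sdiff_of_subset]
  unfold leafSide
  exact Finset.filter_subset _ _

lemma leafSide_card_le {G : SimpleGraph V} (X : Finset V) (a : V) (e : Sym2 V) :
    (leafSide G X a e).card ≤ X.card :=
  Finset.card_le_card (Finset.filter_subset _ _)

lemma two_le_leafSide {G : SimpleGraph V} {X : Finset V} {e : Sym2 V} {a b : V}
    (ha : a ∈ X) (hb : b ∈ X) (hab : a ≠ b)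
    (hs : (G.deleteEdges {e}).Reachable a b) : 2 ≤ (leafSide G X a e).card := by
  have hsub : ({a, b} : Finset V) ⊆ leafSide G X a e := by
    intro x hx
    rcases Finset.mem_insert.1 hx with rfl | hx
    · exact Finset.mem_filter.2 ⟨ha, Reachable.rfl⟩
    · rw [Finset.mem_singleton] at hx
      subst hx
      exact Finset.mem_filter.2 ⟨hb, hs⟩
  calc 2 = ({a, b} : Finset V).card := by
        rw [Finset.card_insert_of_notMem (by simp [hab]), Finset.card_singleton]
    _ ≤ _ := Finset.card_le_card hsub

end Aux2

/-- Corollary 1 of Levy–Yoshida–Pachter: for a tree quartet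
`(a1,a2;a3,a4)` with splitting path `P`,
`S_D(a1,a2) + S_D(a3,a4) - S_D(a1,a3) - S_D(a2,a4)
  = -∑_{e ∈ P} (C(|L_{a1}(e)|-2, m-2) + C(n-|L_{a1}(e)|-2, m-2))·w(e)`. -/
theorem SD_quartet_splitting_path
    {V : Type*} [Fintype V] (G : SimpleGraph V) (X : Finset V)
    (hT : G.IsTree)
    (hleaf : ∀ v : V, G.degree v = 1 ↔ v ∈ X)
    (hint : ∀ v : V, v ∉ X → 3 ≤ G.degree v)
    (w : Sym2 V → ℝ) (hw : ∀ e ∈ G.edgeSet, 0 < w e)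
    (m : ℕ) (hm : 2 ≤ m) (hmn : m ≤ X.card)
    (a1 a2 a3 a4 : V) (h1 : a1 ∈ X) (h2 : a2 ∈ X) (h3 : a3 ∈ X) (h4 : a4 ∈ X)
    (h12 : a1 ≠ a2) (h13 : a1 ≠ a3) (h14 : a1 ≠ a4)
    (h23 : a2 ≠ a3) (h24 : a2 ≠ a4) (h34 : a3 ≠ a4)
    (hq : IsQuartet G a1 a2 a3 a4) :
    SDmap G w X m a1 a2 + SDmap G w X m a3 a4
        - SDmap G w X m a1 a3 - SDmap G w X m a2 a4 =
      - ∑ e ∈ G.edgeFinset.filter (fun e => OnPath G a1 a3 e ∧ OnPath G a2 a4 e),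
          ((C (((leafSide G X a1 e).card : ℤ) - 2) ((m : ℤ) - 2) : ℝ) +
            (C ((X.card : ℤ) - ((leafSide G X a1 e).card : ℤ) - 2) ((m : ℤ) - 2) : ℝ))
            * w e := by
  
  have hc : G.Connected := hT.isConnected
  rw [SDmap_eq hT w X m a1 a2, SDmap_eq hT w X m a3 a4, SDmap_eq hT w X m a1 a3,
    SDmap_eq hT w X m a2 a4, Finset.sum_filter,
    ← Finset.sum_add_distrib, ← Finset.sum_sub_distrib, ← Finset.sum_sub_distrib,
    ← Finset.sum_neg_distrib]
  apply Finset.sum_congr rfl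
  intro e he
  rw [count_cross_real (G := G) h1 h2 h12 m e, count_cross_real (G := G) h3 h4 h34 m e,
    count_cross_real (G := G) h1 h3 h13 m e, count_cross_real (G := G) h2 h4 h24 m e]
  simp only [onPath_iff hT]
  by_cases t2 : (G.deleteEdges {e}).Reachable a1 a2
  · by_cases t3 : (G.deleteEdges {e}).Reachable a1 a3
    · by_cases t4 : (G.deleteEdges {e}).Reachable a1 a4
      · -- TTT
        have s34 : (G.deleteEdges {e}).Reachable a3 a4 := t3.symm.trans t4
        have s24 : (G.deleteEdges {e}).Reachable a2 a4 := t2.symm.trans t4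
        rw [if_pos t2, if_pos s34, if_pos t3, if_pos s24,
          if_neg (fun h : (¬ (G.deleteEdges {e}).Reachable a1 a3) ∧ (¬ (G.deleteEdges {e}).Reachable a2 a4) => h.1 t3),
          show leafSide G X a3 e = leafSide G X a1 e from leafSide_congr t3.symm,
          show leafSide G X a2 e = leafSide G X a1 e from leafSide_congr t2.symm]
        ring
      · -- TTF
        have s34 : ¬ (G.deleteEdges {e}).Reachable a3 a4 := fun h => t4 (t3.trans h)
        have s24 : ¬ (G.deleteEdges {e}).Reachable a2 a4 := fun h => t4 (t2.trans h)
        rw [if_pos t2, if_neg s34, if_pos t3, if_neg s24,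
          if_neg (fun h : (¬ (G.deleteEdges {e}).Reachable a1 a3) ∧ (¬ (G.deleteEdges {e}).Reachable a2 a4) => h.1 t3)]
        ring
    · by_cases t4 : (G.deleteEdges {e}).Reachable a1 a4
      · -- TFT
        have s34 : ¬ (G.deleteEdges {e}).Reachable a3 a4 := fun h => t3 (t4.trans h.symm)
        have s24 : (G.deleteEdges {e}).Reachable a2 a4 := t2.symm.trans t4
        rw [if_pos t2, if_neg s34, if_neg t3, if_pos s24,
          if_neg (fun h : (¬ (G.deleteEdges {e}).Reachable a1 a3) ∧ (¬ (G.deleteEdges {e}).Reachable a2 a4) => h.2 s24),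
          show leafSide G X a2 e = leafSide G X a1 e from leafSide_congr t2.symm]
        ring
      · -- TFF : the splitting-path case
        have s34 : (G.deleteEdges {e}).Reachable a3 a4 := sameSide_of_not hc t3 t4
        have s24 : ¬ (G.deleteEdges {e}).Reachable a2 a4 := fun h => t4 (t2.trans h)
        rw [if_pos t2, if_pos s34, if_neg t3, if_neg s24, if_pos ⟨t3, s24⟩]
        have hl1 : 2 ≤ (leafSide G X a1 e).card := two_le_leafSide h1 h2 h12 t2
        have hl3 : 2 ≤ (leafSide G X a3 e).card := two_le_leafSide h3 h4 h34 s34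
        have hcompl : (leafSide G X a3 e).card = X.card - (leafSide G X a1 e).card :=
          leafSide_card_compl hc t3
        have hle := leafSide_card_le (G := G) X a1 e
        have harg : (X.card : ℤ) - ((leafSide G X a1 e).card : ℤ) - 2
            = ((leafSide G X a3 e).card : ℤ) - 2 := by omega
        rw [harg, C_cast hl1 hm, C_cast hl3 hm]
        ring
  · by_cases t3 : (G.deleteEdges {e}).Reachable a1 a3
    · by_cases t4 : (G.deleteEdges {e}).Reachable a1 a4
      · -- FTT
        have s34 : (G.deleteEdges {e}).Reachable a3 a4 := t3.symm.trans t4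
        have s24 : ¬ (G.deleteEdges {e}).Reachable a2 a4 := fun h => t2 (t4.trans h.symm)
        rw [if_neg t2, if_pos s34, if_pos t3, if_neg s24,
          if_neg (fun h : (¬ (G.deleteEdges {e}).Reachable a1 a3) ∧ (¬ (G.deleteEdges {e}).Reachable a2 a4) => h.1 t3),
          show leafSide G X a3 e = leafSide G X a1 e from leafSide_congr t3.symm]
        ring
      · -- FTF : impossible by the quartet condition
        exfalso
        have s34 : ¬ (G.deleteEdges {e}).Reachable a3 a4 := fun h => t4 (t3.trans h)
        obtain ⟨p, hp, hep⟩ := (onPath_iff hT a1 a2).2 t2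
        obtain ⟨q, hqp, heq⟩ := (onPath_iff hT a3 a4).2 s34
        exact absurd heq (hq p q hp hqp e hep)
    · by_cases t4 : (G.deleteEdges {e}).Reachable a1 a4
      · -- FFT : impossible by the quartet condition
        exfalso
        have s34 : ¬ (G.deleteEdges {e}).Reachable a3 a4 := fun h => t3 (t4.trans h.symm)
        obtain ⟨p, hp, hep⟩ := (onPath_iff hT a1 a2).2 t2
        obtain ⟨q, hqp, heq⟩ := (onPath_iff hT a3 a4).2 s34
        exact absurd heq (hq p q hp hqp e hep)
      · -- FFF
        have s34 : (G.deleteEdges {e}).Reachable a3 a4 := sameSide_of_not hc t3 t4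
        have s24 : (G.deleteEdges {e}).Reachable a2 a4 := sameSide_of_not hc t2 t4
        have s23 : (G.deleteEdges {e}).Reachable a2 a3 := sameSide_of_not hc t2 t3
        rw [if_neg t2, if_pos s34, if_neg t3, if_pos s24,
          if_neg (fun h : (¬ (G.deleteEdges {e}).Reachable a1 a3) ∧ (¬ (G.deleteEdges {e}).Reachable a2 a4) => h.2 s24),
          show leafSide G X a2 e = leafSide G X a3 e from leafSide_congr s23]
        ring
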